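/- arXiv:2310.11636 — 2 statements merged into one kernel-verified Lean document; each statement's English description precedes it below -/
import Mathlib

section
/- Let ρ(x, y) be an L₂-formula with two free variables such that for every dimension n ≥ 1 the binary relation R_n = {(e, e') | B_n ⊨ ρ(e, e')} on partial instances of dimension n is irreflexive and transitive. Then for every n ≥ 1 and all partial instances e₁, e₂ of dimension n such that e₁ and e₂ have the same number of coordinates equal to some false, the same number of coordinates equal to some true, and the same number of coordinates equal to none, it holds that (e₁, e₂) ∉ R_n. -/
open FirstOrder FirstOrder.Language

abbrev PI (n : ℕ) : Type := Fin n → Option Bool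

def Subs {n : ℕ} (e e' : PI n) : Prop := ∀ i, e i ≠ none → e' i = e i

noncomputable def undefCard {n : ℕ} (e : PI n) : ℕ := Set.ncard {i | e i = none}

/-- `e ⪯ e'` iff `|e_⊥| ≥ |e'_⊥|`. -/
def Lel {n : ℕ} (e e' : PI n) : Prop := undefCard e' ≤ undefCard e

/-- The language `L₂` with two binary relation symbols (indexed by `Bool`). -/
def l2Lang : Language where
  Functions _ := Empty
  Relations n := match n with
    | 2 => Bool
    | _ => Empty

/-- The structure `B_n`: partial instances of dimension `n`, with the first binary symbol
interpreted as subsumption `⊑` and the second as `⪯`. -/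
instance l2Struct (n : ℕ) : l2Lang.Structure (PI n) where
  funMap := fun {_} f => f.elim
  RelMap := fun {k} r v => match k, r with
    | 2, false => Subs (v 0) (v 1)
    | 2, true => Lel (v 0) (v 1)

/-- The number of coordinates of `e` equal to `a`. -/
noncomputable def cnt {n : ℕ} (e : PI n) (a : Option Bool) : ℕ := Set.ncard {i | e i = a}

/-! Equal counts of `false`, `true` and `⊥` entries mean `e₂ = e₁ ∘ σ` for a permutation `σ` of
the coordinates. Precomposition with `σ` is an automorphism of `B_n`, hence preserves the definable
relation `R_n`. As this automorphism has finite order, `R_n e₁ (e₁ ∘ σ)` would propagate by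
transitivity along the orbit of `e₁` back to `R_n e₁ e₁`, contradicting irreflexivity. -/

open Equiv

section InvariantStrictOrder

variable {α : Type*} {R : α → α → Prop}

theorem Equiv.Perm.rel_pow_apply_pow_apply {g : Perm α} (hR : ∀ a b, R a b → R (g a) (g b))
    (k : ℕ) {a b : α} (hab : R a b) : R ((g ^ k) a) ((g ^ k) b) := by
  induction k with
  | zero => exact hab
  | succ k ih => simpa only [pow_succ', Perm.mul_apply] using hR _ _ ih

theorem Equiv.Perm.not_rel_apply_of_isOfFinOrder (hirr : ∀ a, ¬ R a a)
    (htrans : ∀ a b c, R a b → R b c → R a c) {g : Perm α} (hg : IsOfFinOrder g)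
    (hR : ∀ a b, R a b → R (g a) (g b)) (a : α) : ¬ R a (g a) := by
  intro hstep
  have hchain : ∀ k, R a ((g ^ (k + 1)) a) := by
    intro k
    induction k with
    | zero => simpa using hstep
    | succ k ih =>
      refine htrans _ _ _ ih ?_
      simpa only [pow_succ, Perm.mul_apply] using g.rel_pow_apply_pow_apply hR (k + 1) hstep
  have hloop := hchain (orderOf g - 1)
  rw [Nat.sub_add_cancel hg.orderOf_pos, pow_orderOf_eq_one, Perm.one_apply] at hloop
  exact hirr a hloop

end InvariantStrictOrder

theorem exists_perm_comp_eq_of_ncard_fiber_eq {ι β : Type*} [Finite ι] {f g : ι → β}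
    (h : ∀ b, {i | f i = b}.ncard = {i | g i = b}.ncard) : ∃ σ : Perm ι, f ∘ σ = g := by
  have hfib : ∀ b, Nonempty ({i // g i = b} ≃ {i // f i = b}) := fun b =>
    Finite.card_eq.mp (h b).symm
  exact ⟨ofFiberEquiv fun b => (hfib b).some, funext (ofFiberEquiv_map _)⟩

theorem FirstOrder.Language.Formula.realize_equiv_pair {L : Language} {M N : Type*}
    [L.Structure M] [L.Structure N] (g : M ≃[L] N) (ρ : L.Formula (Fin 2)) (a b : M) :
    ρ.Realize ![g a, g b] ↔ ρ.Realize ![a, b] := by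
  rw [← StrongHomClass.realize_formula g ρ (v := ![a, b])]
  congr!
  ext i
  fin_cases i <;> rfl

theorem cnt_comp_perm {n : ℕ} (e : PI n) (σ : Perm (Fin n)) (a : Option Bool) :
    cnt (e ∘ σ) a = cnt e a :=
  Nat.card_congr (σ.subtypeEquiv fun _ => Iff.rfl)

def permAut {n : ℕ} (σ : Perm (Fin n)) : PI n ≃[l2Lang] PI n where
  toEquiv := arrowCongr σ.symm (Equiv.refl _)
  map_fun' := fun f _ => f.elim
  map_rel' := by
    intro k r x
    match k, r with
    | 2, false =>
      show Subs (x 0 ∘ σ) (x 1 ∘ σ) ↔ Subs (x 0) (x 1)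
      exact ⟨fun h i hi => by simpa using h (σ.symm i) (by simpa using hi),
        fun h i hi => h (σ i) hi⟩
    | 2, true =>
      show cnt (x 1 ∘ σ) none ≤ cnt (x 0 ∘ σ) none ↔ cnt (x 1) none ≤ cnt (x 0) none
      rw [cnt_comp_perm, cnt_comp_perm]

theorem stmt9 (ρ : l2Lang.Formula (Fin 2))
    (hpo : ∀ n : ℕ, 1 ≤ n →
      (∀ e : PI n, ¬ ρ.Realize ![e, e]) ∧
      (∀ e₁ e₂ e₃ : PI n,
        ρ.Realize ![e₁, e₂] → ρ.Realize ![e₂, e₃] → ρ.Realize ![e₁, e₃])) :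
    ∀ n : ℕ, 1 ≤ n → ∀ e₁ e₂ : PI n,
      cnt e₁ (some false) = cnt e₂ (some false) →
      cnt e₁ (some true) = cnt e₂ (some true) →
      cnt e₁ none = cnt e₂ none →
      ¬ ρ.Realize ![e₁, e₂] := by
  intro n hn e₁ e₂ hfalse htrue hnone
  obtain ⟨hirr, htrans⟩ := hpo n hn
  obtain ⟨σ, rfl⟩ : ∃ σ : Perm (Fin n), e₁ ∘ σ = e₂ :=
    exists_perm_comp_eq_of_ncard_fiber_eq (by rintro (_ | _ | _) <;> assumption)
  let g := permAut σ
  exact Perm.not_rel_apply_of_isOfFinOrder (R := fun a b => ρ.Realize ![a, b]) hirr htrans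
    (isOfFinOrder_of_finite g.toEquiv) (fun a b => (ρ.realize_equiv_pair g a b).mpr) e₁
end

section
/- There exists a first-order formula λ(x, y, z) with three free variables over the language L₂ such that for every dimension n ≥ 1 and all total instances e₁, e₂, e₃ of dimension n, B_n ⊨ λ(e₁, e₂, e₃) if and only if d_H(e₁, e₂) ≤ d_H(e₁, e₃), where d_H denotes Hamming distance. -/
/-! Under `⊑`, the common lower bounds of two total instances `e, e'` are the partial instances
that agree with both wherever they are defined, so each of them is undefined at least on the
disagreement set of `e` and `e'`; the pointwise meet is undefined exactly there. Hence
`d_H(e, e')` is the least number of `⊥`s of a common lower bound, and `d_H(x, y) ≤ d_H(x, z)`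
says: some common lower bound of `x, y` is `⪯`-above every common lower bound of `x, z`. -/

open FirstOrder FirstOrder.Language

/-- A partial instance is total when every feature is defined. -/
def TotalPI {n : ℕ} (e : PI n) : Prop := ∀ i, e i ≠ none

/-- The Hamming distance between (total) partial instances: the number of coordinates
where they differ. -/
noncomputable def hammingD {n : ℕ} (e e' : PI n) : ℕ := Set.ncard {i | e i ≠ e' i}

section Meet

variable {n : ℕ}

def meetPI (e e' : PI n) : PI n := fun i => if e i = e' i then e i else none

lemma subs_meetPI_left (e e' : PI n) : Subs (meetPI e e') e := by
  intro i h
  by_cases hc : e i = e' i <;> simp_all [meetPI]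

lemma subs_meetPI_right (e e' : PI n) : Subs (meetPI e e') e' := by
  intro i h
  by_cases hc : e i = e' i <;> simp_all [meetPI]

lemma undefCard_meetPI {e : PI n} (he : TotalPI e) (e' : PI n) :
    undefCard (meetPI e e') = hammingD e e' := by
  unfold undefCard hammingD
  congr 1
  ext i
  by_cases hc : e i = e' i
  · simpa [meetPI, hc] using hc ▸ he i
  · simp [meetPI, hc]

lemma hammingD_le_undefCard {w e e' : PI n} (h : Subs w e) (h' : Subs w e') :
    hammingD e e' ≤ undefCard w := by
  refine Set.ncard_le_ncard (fun i hi => ?_) (Set.toFinite _)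
  by_contra hw
  exact hi ((h i hw).trans (h' i hw).symm)

lemma hammingD_le_iff_exists_subs {e₁ e₂ e₃ : PI n} (he₁ : TotalPI e₁) :
    hammingD e₁ e₂ ≤ hammingD e₁ e₃ ↔
      ∃ u, Subs u e₁ ∧ Subs u e₂ ∧ ∀ w, Subs w e₁ → Subs w e₃ → undefCard u ≤ undefCard w := by
  constructor
  · intro hle
    refine ⟨meetPI e₁ e₂, subs_meetPI_left _ _, subs_meetPI_right _ _, fun w hw₁ hw₃ => ?_⟩
    rw [undefCard_meetPI he₁]
    exact hle.trans (hammingD_le_undefCard hw₁ hw₃)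
  · rintro ⟨u, hu₁, hu₂, hmin⟩
    calc hammingD e₁ e₂ ≤ undefCard u := hammingD_le_undefCard hu₁ hu₂
      _ ≤ undefCard (meetPI e₁ e₃) := hmin _ (subs_meetPI_left _ _) (subs_meetPI_right _ _)
      _ = hammingD e₁ e₃ := undefCard_meetPI he₁ _

end Meet

section Formula

variable {α : Type*} {m : ℕ}

def subsF (t t' : l2Lang.Term (α ⊕ Fin m)) : l2Lang.BoundedFormula α m :=
  Relations.boundedFormula₂ (show l2Lang.Relations 2 from false) t t'

def lelF (t t' : l2Lang.Term (α ⊕ Fin m)) : l2Lang.BoundedFormula α m :=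
  Relations.boundedFormula₂ (show l2Lang.Relations 2 from true) t t'

lemma realize_subsF {n : ℕ} {t t' : l2Lang.Term (α ⊕ Fin m)} {v : α → PI n} {xs : Fin m → PI n} :
    (subsF t t').Realize v xs ↔ Subs (t.realize (Sum.elim v xs)) (t'.realize (Sum.elim v xs)) :=
  Iff.rfl

lemma realize_lelF {n : ℕ} {t t' : l2Lang.Term (α ⊕ Fin m)} {v : α → PI n} {xs : Fin m → PI n} :
    (lelF t t').Realize v xs ↔ Lel (t.realize (Sum.elim v xs)) (t'.realize (Sum.elim v xs)) :=
  Iff.rfl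

/-- `λ(x, y, z) := ∃ u, u ⊑ x ∧ u ⊑ y ∧ ∀ w, (w ⊑ x ∧ w ⊑ z) → w ⪯ u`. -/
def hammingLeFormula : l2Lang.Formula (Fin 3) :=
  let x : ∀ {m}, l2Lang.Term (Fin 3 ⊕ Fin m) := Term.var (Sum.inl 0)
  let y : ∀ {m}, l2Lang.Term (Fin 3 ⊕ Fin m) := Term.var (Sum.inl 1)
  let z : ∀ {m}, l2Lang.Term (Fin 3 ⊕ Fin m) := Term.var (Sum.inl 2)
  ∃' (subsF (&0) x ⊓ subsF (&0) y ⊓ ∀' (subsF (&1) x ⊓ subsF (&1) z ⟹ lelF (&1) (&0)))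

lemma realize_hammingLeFormula {n : ℕ} (v : Fin 3 → PI n) :
    hammingLeFormula.Realize v ↔
      ∃ u, Subs u (v 0) ∧ Subs u (v 1) ∧
        ∀ w, Subs w (v 0) → Subs w (v 2) → undefCard u ≤ undefCard w := by
  simp [hammingLeFormula, Formula.Realize, realize_subsF, realize_lelF, Lel, Fin.snoc, and_assoc]

end Formula

theorem stmt11 :
    ∃ lam : l2Lang.Formula (Fin 3),
      ∀ (n : ℕ), 1 ≤ n → ∀ (e₁ e₂ e₃ : PI n), TotalPI e₁ → TotalPI e₂ → TotalPI e₃ →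
        (lam.Realize ![e₁, e₂, e₃] ↔ hammingD e₁ e₂ ≤ hammingD e₁ e₃) :=
  ⟨hammingLeFormula, fun _ _ _ _ _ h₁ _ _ =>
    (realize_hammingLeFormula _).trans (hammingD_le_iff_exists_subs h₁).symm⟩
end
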